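/- arXiv:2506.09768 — 8 statements merged into one kernel-verified Lean document; each statement's English description precedes it below -/
import Mathlib

section
/- For every d ≥ 1, the set {1, 2, ..., d} of d cyclically consecutive vertices is a maximal independent set of the Andrásfai graph Γ_d. -/
/-- The Andrásfai graph `Γ_d`: vertex set `ZMod (3*d-1)`, with `x` adjacent to `y`
iff `y - x ∈ {d, ..., 2*d-1}` (the condition is symmetrized). -/
def andrasfai (d : ℕ) : SimpleGraph (ZMod (3 * d - 1)) where
  Adj x y := x ≠ y ∧ ((d ≤ (y - x).val ∧ (y - x).val ≤ 2 * d - 1) ∨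
      (d ≤ (x - y).val ∧ (x - y).val ≤ 2 * d - 1))
  symm := ⟨fun x y h => ⟨h.1.symm, h.2.symm⟩⟩
  loopless := ⟨fun x h => h.1 rfl⟩
/-- `S` is an independent set of `G`. -/
def IndepSet {V : Type*} (G : SimpleGraph V) (S : Set V) : Prop :=
  S.Pairwise fun a b => ¬ G.Adj a b
/-- The image in `ZMod (3*d-1)` of the natural numbers in `[a, b]`. -/
def castIcc (d a b : ℕ) : Set (ZMod (3 * d - 1)) :=
  (fun i : ℕ => (i : ZMod (3 * d - 1))) '' Set.Icc a b

/-! The vertices `1, …, d` are pairwise at cyclic distance less than `d`, so they are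
independent. Every other vertex `k ∈ {0} ∪ {d+1, …, 3d-2}` is adjacent to one of them:
`0` to `d`, and `k ≥ d+1` to `max 1 (k - (2d-1))`. An independent superset of `{1, …, d}`
can therefore contain no other vertex. -/

theorem IndepSet.eq_of_subset_of_forall_exists_adj {V : Type*} {G : SimpleGraph V}
    {S T : Set V} (hS : IndepSet G S) (hTS : T ⊆ S) (hT : ∀ v ∉ T, ∃ w ∈ T, G.Adj v w) :
    S = T := by
  refine hTS.antisymm' fun v hv => ?_
  by_contra hvT
  obtain ⟨w, hwT, hvw⟩ := hT v hvT
  exact hS hv (hTS hwT) hvw.ne hvw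

namespace andrasfai

variable {d : ℕ}

/-- The window `[d, 2d-1]` is symmetric under `v ↦ (3d-1) - v`. -/
theorem adj_iff (hd : 1 ≤ d) {x y : ZMod (3 * d - 1)} :
    (andrasfai d).Adj x y ↔ d ≤ (x - y).val ∧ (x - y).val ≤ 2 * d - 1 := by
  have : NeZero (3 * d - 1) := ⟨by omega⟩
  have hlt := (x - y).val_lt
  have hval : (y - x).val = if x - y = 0 then 0 else 3 * d - 1 - (x - y).val := by
    rw [← ZMod.neg_val, neg_sub]
  constructor
  · rintro ⟨hxy, hyx | hxy'⟩
    · rw [hval, if_neg (sub_ne_zero.mpr hxy)] at hyx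
      omega
    · exact hxy'
  · rintro ⟨hlo, hhi⟩
    have hxy : x ≠ y := fun h => by simp [h] at hlo; omega
    exact ⟨hxy, Or.inr ⟨hlo, hhi⟩⟩

theorem adj_natCast_iff (hd : 1 ≤ d) {a b : ℕ} (hba : b ≤ a) (ha : a < 3 * d - 1) :
    (andrasfai d).Adj (a : ZMod (3 * d - 1)) b ↔ d ≤ a - b ∧ a - b ≤ 2 * d - 1 := by
  rw [adj_iff hd, ← Nat.cast_sub hba, ZMod.val_cast_of_lt (by omega)]

theorem indepSet_castIcc_one (hd : 1 ≤ d) : IndepSet (andrasfai d) (castIcc d 1 d) := by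
  have key : ∀ i ∈ Set.Icc 1 d, ∀ j ∈ Set.Icc 1 d, j ≤ i →
      ¬ (andrasfai d).Adj (i : ZMod (3 * d - 1)) j := fun i hi j hj hji => by
    rw [adj_natCast_iff hd hji (by grind)]
    grind
  rintro _ ⟨i, hi, rfl⟩ _ ⟨j, hj, rfl⟩ - hadj
  rcases le_total j i with hji | hij
  · exact key i hi j hj hji hadj
  · exact key j hj i hi hij hadj.symm

theorem exists_adj_mem_castIcc_one (hd : 1 ≤ d) (v : ZMod (3 * d - 1))
    (hv : v ∉ castIcc d 1 d) :
    ∃ w ∈ castIcc d 1 d, (andrasfai d).Adj v w := by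
  have : NeZero (3 * d - 1) := ⟨by omega⟩
  obtain ⟨k, hk, rfl⟩ : ∃ k < 3 * d - 1, (k : ZMod (3 * d - 1)) = v :=
    ⟨v.val, v.val_lt, ZMod.natCast_zmod_val v⟩
  have hk' : k = 0 ∨ d + 1 ≤ k := by
    by_contra! h
    exact hv ⟨k, ⟨by omega, by omega⟩, rfl⟩
  rcases hk' with rfl | hdk
  · refine ⟨d, ⟨d, ⟨hd, le_rfl⟩, rfl⟩, ?_⟩
    rw [Nat.cast_zero, (andrasfai d).adj_comm, ← Nat.cast_zero,
      adj_natCast_iff hd (Nat.zero_le d) (by omega)]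
    omega
  · refine ⟨_, ⟨max 1 (k - (2 * d - 1)), ⟨le_max_left _ _, by omega⟩, rfl⟩, ?_⟩
    rw [adj_natCast_iff hd (by omega) hk]
    omega

end andrasfai

/-- `{1, ..., d}` is a maximal independent set of the Andrásfai graph `Γ_d`. -/
theorem castIcc_one_d_maximal_indep (d : ℕ) (hd : 1 ≤ d) :
    IndepSet (andrasfai d) (castIcc d 1 d) ∧
    ∀ S : Set (ZMod (3 * d - 1)), IndepSet (andrasfai d) S → castIcc d 1 d ⊆ S →
      S = castIcc d 1 d :=
  ⟨andrasfai.indepSet_castIcc_one hd, fun _ hS hsub =>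
    hS.eq_of_subset_of_forall_exists_adj hsub (andrasfai.exists_adj_mem_castIcc_one hd)⟩
end

section
/- Every maximal independent set of the Andrásfai graph Γ_d consists of exactly d cyclically consecutive vertices. -/
/-!
Two vertices of `Γ_d` are non-adjacent exactly when they are at cyclic distance less than `d`,
so an independent set is a set of pairwise close points on a cycle of length `3d - 1`. Fix
`s ∈ S` and let `b ∈ S` be the point furthest behind `s` among those fewer than `d` steps
behind it. Points of `S` behind `s` are then at most `d - 1` steps ahead of `b`; points ahead
of `s` are at most `2d - 2` steps ahead of `b`, hence at least `d` steps behind it on a cycle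
of length `≥ 3d - 2`, so closeness to `b` again forces them into the window `b, …, b + d - 1`.
That window is itself independent, and maximality gives equality.
-/

def CyclicallyClose {n : ℕ} (d : ℕ) (x y : ZMod n) : Prop :=
  (y - x).val < d ∨ (x - y).val < d

namespace ZMod

variable {n : ℕ} [NeZero n]

lemma val_sub_add_val_sub_of_ne {x y : ZMod n} (h : x ≠ y) : (x - y).val + (y - x).val = n := by
  have hxy : x - y ≠ 0 := sub_ne_zero.2 h
  have := (x - y).val_lt
  rw [← neg_sub x y, neg_val, if_neg hxy]
  omega

lemma setOf_exists_eq_add_natCast (a : ZMod n) (d : ℕ) :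
    {x : ZMod n | ∃ i : ℕ, i < d ∧ x = a + i} = {x | (x - a).val < d} := by
  ext x
  constructor
  · rintro ⟨i, hi, rfl⟩
    show ((a + i) - a).val < d
    rw [add_sub_cancel_left, val_natCast]
    exact (Nat.mod_le i n).trans_lt hi
  · intro hx
    exact ⟨(x - a).val, hx, by rw [natCast_zmod_val, add_sub_cancel]⟩

lemma cyclicallyClose_of_val_sub_lt {a x y : ZMod n} {d : ℕ}
    (hx : (x - a).val < d) (hy : (y - a).val < d) : CyclicallyClose d x y := by
  have hyx : y - x = (y - a) - (x - a) := by ring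
  have hxy : x - y = (x - a) - (y - a) := by ring
  rcases le_total (x - a).val (y - a).val with h | h
  · left; rw [hyx, val_sub h]; omega
  · right; rw [hxy, val_sub h]; omega

theorem exists_window_of_pairwise_cyclicallyClose {d : ℕ} (hd : 0 < d) (hn : 3 * d ≤ n + 2)
    {S : Set (ZMod n)} (hS : S.Pairwise (CyclicallyClose d)) :
    ∃ a : ZMod n, ∀ x ∈ S, (x - a).val < d := by
  have close : ∀ x ∈ S, ∀ y ∈ S, CyclicallyClose d x y := by
    intro x hx y hy
    rcases eq_or_ne x y with rfl | hxy
    · left; simpa using hd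
    · exact hS hx hy hxy
  rcases S.eq_empty_or_nonempty with rfl | ⟨s, hs⟩
  · exact ⟨0, by simp⟩
  obtain ⟨b, ⟨hbS, hbs⟩, hb_max⟩ := Set.exists_max_image {b ∈ S | (s - b).val < d}
    (fun b => (s - b).val) (Set.toFinite _) ⟨s, hs, by simpa using hd⟩
  refine ⟨b, fun t ht => ?_⟩
  rcases close s hs t ht with hts | hst
  · have hsum : (t - b).val = (t - s).val + (s - b).val := by
      rw [show t - b = (t - s) + (s - b) by ring, val_add_of_lt (by omega)]
    rcases eq_or_ne t b with rfl | hne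
    · simpa using hd
    refine (close t ht b hbS).resolve_left fun hbt => ?_
    have := val_sub_add_val_sub_of_ne hne
    omega
  · have hle : (s - t).val ≤ (s - b).val := hb_max t ⟨ht, hst⟩
    have hdiff : t - b = (s - b) - (s - t) := by ring
    rw [hdiff, val_sub hle]
    omega

end ZMod

open ZMod

lemma andrasfai_not_adj_iff {d : ℕ} (hd : 0 < d) (x y : ZMod (3 * d - 1)) :
    ¬ (andrasfai d).Adj x y ↔ CyclicallyClose d x y := by
  have : NeZero (3 * d - 1) := ⟨by omega⟩
  rcases eq_or_ne x y with rfl | hne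
  · simpa [CyclicallyClose] using hd
  have hsum := val_sub_add_val_sub_of_ne hne
  simp only [andrasfai, CyclicallyClose, ne_eq, hne, not_false_eq_true, true_and]
  omega

lemma indepSet_andrasfai_iff {d : ℕ} (hd : 0 < d) (S : Set (ZMod (3 * d - 1))) :
    IndepSet (andrasfai d) S ↔ S.Pairwise (CyclicallyClose d) := by
  simp only [IndepSet, andrasfai_not_adj_iff hd]

/-- Every maximal independent set of the Andrásfai graph `Γ_d` consists of `d`
cyclically consecutive vertices. -/
theorem maximal_indep_andrasfai_consecutive (d : ℕ) (hd : 1 ≤ d)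
    (S : Set (ZMod (3 * d - 1))) (hS : IndepSet (andrasfai d) S)
    (hmax : ∀ T : Set (ZMod (3 * d - 1)), IndepSet (andrasfai d) T → S ⊆ T → T = S) :
    ∃ a : ZMod (3 * d - 1), S = {x | ∃ i : ℕ, i < d ∧ x = a + (i : ZMod (3 * d - 1))} := by
  have : NeZero (3 * d - 1) := ⟨by omega⟩
  obtain ⟨a, hSa⟩ := exists_window_of_pairwise_cyclicallyClose hd (by omega)
    ((indepSet_andrasfai_iff hd S).1 hS)
  refine ⟨a, ?_⟩
  rw [setOf_exists_eq_add_natCast]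
  have hwindow : IndepSet (andrasfai d) {x | (x - a).val < d} :=
    (indepSet_andrasfai_iff hd _).2 fun x hx y hy _ => cyclicallyClose_of_val_sub_lt hx hy
  exact (hmax _ hwindow hSa).symm
end

section
/- If d ≥ 1 and D_1 is a maximal independent set of the Andrásfai graph Γ_d, then Γ_d admits a proper 3-coloring with color classes {D_1, D_2, D_3} such that the subgraph of Γ_d induced on D_2 ∪ D_3 contains no induced matching of size 2 (equivalently, the complement of Γ_d restricted to D_2 ∪ D_3 has no induced 4-cycle). -/
/-- The subgraph of `G` induced on `S` has no induced matching with two edges: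
there are no four distinct vertices `u, v, u', v'` in `S` with `uv` and `u'v'`
edges and no other edges among them. -/
def NoInducedTwoMatching {V : Type*} (G : SimpleGraph V) (S : Set V) : Prop :=
  ¬ ∃ u v u' v', u ∈ S ∧ v ∈ S ∧ u' ∈ S ∧ v' ∈ S ∧
    u ≠ u' ∧ u ≠ v' ∧ v ≠ u' ∧ v ≠ v' ∧
    G.Adj u v ∧ G.Adj u' v' ∧
    ¬ G.Adj u u' ∧ ¬ G.Adj u v' ∧ ¬ G.Adj v u' ∧ ¬ G.Adj v v'

/-!
Measure positions of vertices from a base point `a`, i.e. `x ↦ (x - a).val`. Adjacency in `Γ_d`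
then says that the positions are at distance in `[d, 2d)`. Hence an independent set is trapped in
an arc of `d` consecutive vertices, and a maximal one is such an arc `[a, a + d)`. Colour the rest
by the arcs `[a + d, a + 2d)` and `[a + 2d, a + 3d - 1)`; their union is an arc of `2d - 1`
vertices, in which adjacency just means distance at least `d`. Two such edges `p < q`, `p' < q'`
with `p ≤ p'` would then also give the edge `p q'`.
-/

def arc {n : ℕ} (a : ZMod n) (lo hi : ℕ) : Set (ZMod n) :=
  {x | lo ≤ (x - a).val ∧ (x - a).val < hi}

lemma arc_union_arc {n : ℕ} (a : ZMod n) {lo mid hi : ℕ} (h₁ : lo ≤ mid) (h₂ : mid ≤ hi) :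
    arc a lo mid ∪ arc a mid hi = arc a lo hi := by
  ext x
  simp only [arc, Set.mem_union, Set.mem_ofPred_eq]
  omega

lemma disjoint_arc {n : ℕ} (a : ZMod n) {lo₁ hi₁ lo₂ hi₂ : ℕ} (h : hi₁ ≤ lo₂) :
    Disjoint (arc a lo₁ hi₁) (arc a lo₂ hi₂) :=
  Set.disjoint_left.mpr fun _ hx₁ hx₂ => by
    simp only [arc, Set.mem_ofPred_eq] at hx₁ hx₂
    omega

lemma arc_zero_eq_univ {n : ℕ} [NeZero n] (a : ZMod n) : arc a 0 n = Set.univ :=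
  Set.eq_univ_of_forall fun _ => ⟨Nat.zero_le _, ZMod.val_lt _⟩

lemma IndepSet.not_adj {V : Type*} {G : SimpleGraph V} {S : Set V} (hS : IndepSet G S)
    {x y : V} (hx : x ∈ S) (hy : y ∈ S) : ¬ G.Adj x y := by
  rcases eq_or_ne x y with rfl | hxy
  · exact G.loopless.irrefl x
  · exact hS hx hy hxy

lemma andrasfai_adj_iff {d : ℕ} (hd : 1 ≤ d) (x y : ZMod (3 * d - 1)) :
    (andrasfai d).Adj x y ↔ d ≤ (y - x).val ∧ (y - x).val < 2 * d := by
  have : NeZero (3 * d - 1) := ⟨by omega⟩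
  rcases eq_or_ne x y with rfl | hxy
  · simp only [SimpleGraph.irrefl, sub_self, ZMod.val_zero, false_iff]
    omega
  have hyx : y - x ≠ 0 := sub_ne_zero.mpr hxy.symm
  have hneg : (x - y).val = 3 * d - 1 - (y - x).val := by
    rw [← neg_sub, ZMod.neg_val, if_neg hyx]
  have hlt := ZMod.val_lt (y - x)
  have hpos : (y - x).val ≠ 0 := (ZMod.val_ne_zero _).mpr hyx
  simp only [andrasfai, ne_eq, hxy, not_false_eq_true, true_and, hneg]
  omega

lemma andrasfai_adj_iff_dist {d : ℕ} (hd : 1 ≤ d) (a x y : ZMod (3 * d - 1)) :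
    (andrasfai d).Adj x y ↔
      d ≤ Nat.dist (x - a).val (y - a).val ∧ Nat.dist (x - a).val (y - a).val < 2 * d := by
  have : NeZero (3 * d - 1) := ⟨by omega⟩
  wlog h : (x - a).val ≤ (y - a).val generalizing x y
  · rw [SimpleGraph.adj_comm, Nat.dist_comm]
    exact this y x (by omega)
  rw [andrasfai_adj_iff hd, Nat.dist_eq_sub_of_le h, ← ZMod.val_sub h, sub_sub_sub_cancel_right]

lemma indepSet_arc {d : ℕ} (hd : 1 ≤ d) (a : ZMod (3 * d - 1)) {lo hi : ℕ} (h : hi ≤ lo + d) :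
    IndepSet (andrasfai d) (arc a lo hi) := by
  intro x hx y hy _
  simp only [arc, Set.mem_ofPred_eq] at hx hy
  rw [andrasfai_adj_iff_dist hd a, Nat.dist]
  omega

lemma exists_subset_arc_of_indepSet {d : ℕ} (hd : 1 ≤ d) {D : Set (ZMod (3 * d - 1))}
    (hD : IndepSet (andrasfai d) D) : ∃ a, D ⊆ arc a 0 d := by
  have : NeZero (3 * d - 1) := ⟨by omega⟩
  rcases D.eq_empty_or_nonempty with rfl | ⟨s₀, hs₀⟩
  · exact ⟨0, Set.empty_subset _⟩
  -- Counted from `b`, the vertex `s₀` sits at position `d - 1`, so `D` lies in `[0, 2d - 1)`.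
  set b := s₀ - ((d - 1 : ℕ) : ZMod (3 * d - 1))
  have hs₀b : (s₀ - b).val = d - 1 := by
    rw [sub_sub_cancel, ZMod.val_cast_of_lt (by omega)]
  have hwindow : ∀ s ∈ D, (s - b).val + 1 < 2 * d := fun s hs => by
    have := hD.not_adj hs₀ hs
    have := ZMod.val_lt (s - b)
    rw [andrasfai_adj_iff_dist hd b, hs₀b, Nat.dist] at *
    omega
  obtain ⟨m, hm, hmin⟩ := D.exists_min_image (fun s => (s - b).val) D.toFinite ⟨s₀, hs₀⟩
  refine ⟨m, fun s hs => ?_⟩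
  have hsm : (s - m).val = (s - b).val - (m - b).val := by
    rw [← ZMod.val_sub (hmin s hs), sub_sub_sub_cancel_right]
  have := hD.not_adj hm hs
  have := hwindow s hs
  have := hmin s hs
  rw [andrasfai_adj_iff_dist hd b, Nat.dist] at *
  simp only [arc, Set.mem_ofPred_eq, hsm]
  omega

lemma exists_eq_arc_of_maximal {d : ℕ} (hd : 1 ≤ d) {D : Set (ZMod (3 * d - 1))}
    (hD : IndepSet (andrasfai d) D)
    (hmax : ∀ T : Set (ZMod (3 * d - 1)), IndepSet (andrasfai d) T → D ⊆ T → T = D) :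
    ∃ a, D = arc a 0 d :=
  let ⟨a, ha⟩ := exists_subset_arc_of_indepSet hd hD
  ⟨a, (hmax _ (indepSet_arc hd a (Nat.le_add_left d 0)) ha).symm⟩

lemma noInducedTwoMatching_arc {d : ℕ} (hd : 1 ≤ d) (a : ZMod (3 * d - 1)) {lo hi : ℕ}
    (h : hi + 1 ≤ lo + 2 * d) : NoInducedTwoMatching (andrasfai d) (arc a lo hi) := by
  rintro ⟨u, v, u', v', hu, hv, hu', hv', -, -, -, -, huv, hu'v', huu', huv', hvu', hvv'⟩
  simp only [arc, Set.mem_ofPred_eq] at hu hv hu' hv'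
  simp only [andrasfai_adj_iff_dist hd a, Nat.dist] at huv hu'v' huu' huv' hvu' hvv'
  omega

/-- If `D_1` is a maximal independent set of the Andrásfai graph `Γ_d`, then `Γ_d`
admits a proper 3-coloring `{D_1, D_2, D_3}` such that the subgraph induced on
`D_2 ∪ D_3` has no induced matching of size two. -/
theorem andrasfai_coloring_of_maximal_indep (d : ℕ) (hd : 1 ≤ d)
    (D1 : Set (ZMod (3 * d - 1))) (hD1 : IndepSet (andrasfai d) D1)
    (hmax : ∀ T : Set (ZMod (3 * d - 1)), IndepSet (andrasfai d) T → D1 ⊆ T → T = D1) :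
    ∃ D2 D3 : Set (ZMod (3 * d - 1)),
      IndepSet (andrasfai d) D2 ∧ IndepSet (andrasfai d) D3 ∧
      Disjoint D1 D2 ∧ Disjoint D1 D3 ∧ Disjoint D2 D3 ∧
      D1 ∪ D2 ∪ D3 = Set.univ ∧
      NoInducedTwoMatching (andrasfai d) (D2 ∪ D3) := by
  have : NeZero (3 * d - 1) := ⟨by omega⟩
  obtain ⟨a, rfl⟩ := exists_eq_arc_of_maximal hd hD1 hmax
  refine ⟨arc a d (2 * d), arc a (2 * d) (3 * d - 1),
    indepSet_arc hd a (by omega), indepSet_arc hd a (by omega),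
    disjoint_arc a le_rfl, disjoint_arc a (by omega), disjoint_arc a le_rfl, ?_, ?_⟩
  · rw [arc_union_arc a (by omega) (by omega), arc_union_arc a (by omega) (by omega),
      arc_zero_eq_univ]
  · rw [arc_union_arc a (by omega) (by omega)]
    exact noInducedTwoMatching_arc hd a (by omega)
end

section
/- Let Γ_d be the Andrásfai graph with D_2 = {d+1,...,2d} and D_3 = {2d+1,...,3d-1}. Then the subgraph of Γ_d induced on D_2 ∪ D_3 has no induced matching with two edges. -/
theorem NoInducedTwoMatching.subset {V : Type*} {G : SimpleGraph V} {S T : Set V}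
    (hT : NoInducedTwoMatching G T) (hST : S ⊆ T) : NoInducedTwoMatching G S :=
  fun ⟨u, v, u', v', hu, hv, hu', hv', h⟩ => hT ⟨u, v, u', v', hST hu, hST hv, hST hu', hST hv', h⟩

/- Order both edges as `a ≤ b`, `a' ≤ b'`. If `a ≤ a'` then `b' - a ≥ b' - a' ≥ d`, otherwise
`b - a' ≥ b - a ≥ d`: some cross pair is an edge. -/
theorem noInducedTwoMatching_image_of_adj_iff_le_dist {V : Type*} (G : SimpleGraph V)
    (g : ℕ → V) (T : Set ℕ) (d : ℕ)
    (hadj : ∀ a ∈ T, ∀ b ∈ T, G.Adj (g a) (g b) ↔ d ≤ a.dist b) :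
    NoInducedTwoMatching G (g '' T) := by
  rintro ⟨_, _, _, _, ⟨a, ha, rfl⟩, ⟨b, hb, rfl⟩, ⟨a', ha', rfl⟩, ⟨b', hb', rfl⟩, -, -, -, -,
    hab, ha'b', haa', hab', hba', hbb'⟩
  rw [hadj a ha b hb] at hab
  rw [hadj a' ha' b' hb'] at ha'b'
  rw [hadj a ha a' ha'] at haa'
  rw [hadj a ha b' hb'] at hab'
  rw [hadj b hb a' ha'] at hba'
  rw [hadj b hb b' hb'] at hbb'
  simp only [Nat.dist] at *
  omega

theorem andrasfai_adj_natCast_iff_of_le {d a b : ℕ} (hab : a ≤ b) (hlt : b - a < 3 * d - 1) :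
    (andrasfai d).Adj a b ↔ d ≤ b - a ∧ b - a ≤ 2 * d - 1 := by
  have : NeZero (3 * d - 1) := ⟨by omega⟩
  have hba : ((b : ZMod (3 * d - 1)) - a).val = b - a := by
    rw [← Nat.cast_sub hab, ZMod.val_natCast_of_lt hlt]
  have hab' : ((a : ZMod (3 * d - 1)) - b).val = if b - a = 0 then 0 else 3 * d - 1 - (b - a) := by
    rw [← neg_sub, ZMod.neg_val]
    simp only [← ZMod.val_eq_zero, hba]
  have hne : (a : ZMod (3 * d - 1)) ≠ b ↔ b - a ≠ 0 := by
    rw [ne_comm, Ne, ← sub_eq_zero, ← ZMod.val_eq_zero, hba]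
  simp only [andrasfai, hne, hba, hab']
  split_ifs <;> omega

theorem andrasfai_adj_natCast_iff {d a b : ℕ} (hlt : a.dist b < 3 * d - 1) :
    (andrasfai d).Adj a b ↔ d ≤ a.dist b ∧ a.dist b ≤ 2 * d - 1 := by
  unfold Nat.dist at *
  rcases le_total a b with h | h
  · rw [andrasfai_adj_natCast_iff_of_le h (by omega)]; omega
  · rw [SimpleGraph.adj_comm, andrasfai_adj_natCast_iff_of_le h (by omega)]; omega

theorem andrasfai_D2_D3_noInducedTwoMatching_general (d : ℕ) :
    NoInducedTwoMatching (andrasfai d)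
      (castIcc d (d + 1) (2 * d) ∪ castIcc d (2 * d + 1) (3 * d - 1)) := by
  have hsub : castIcc d (d + 1) (2 * d) ∪ castIcc d (2 * d + 1) (3 * d - 1) ⊆
      castIcc d (d + 1) (3 * d - 1) := by
    rintro _ (⟨a, ⟨h₁, h₂⟩, rfl⟩ | ⟨a, ⟨h₁, h₂⟩, rfl⟩) <;> exact ⟨a, ⟨by omega, by omega⟩, rfl⟩
  refine (noInducedTwoMatching_image_of_adj_iff_le_dist _ _ _ d fun a ha b hb => ?_).subset hsub
  simp only [Set.mem_Icc] at ha hb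
  have hdist : a.dist b ≤ 2 * d - 2 := by unfold Nat.dist; omega
  rw [andrasfai_adj_natCast_iff (by omega)]
  omega

/-- With `D_2 = {d+1,...,2d}` and `D_3 = {2d+1,...,3d-1}`, the subgraph of the
Andrásfai graph `Γ_d` induced on `D_2 ∪ D_3` has no induced matching with two
edges. -/
theorem andrasfai_D2_D3_noInducedTwoMatching (d : ℕ) (hd : 1 ≤ d) :
    NoInducedTwoMatching (andrasfai d)
      (castIcc d (d + 1) (2 * d) ∪ castIcc d (2 * d + 1) (3 * d - 1)) :=
  andrasfai_D2_D3_noInducedTwoMatching_general d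
end

section
/- Let G be a finite graph with independence number 2. Suppose V(G) admits a partition {D_1, D_2, D_3} such that each D_i is a clique, D_1 is a maximum clique of G, and the subgraph of G induced on D_2 ∪ D_3 has no induced 4-cycle. Then G contains an immersion of the complete graph on |D_2 ∪ D_3| vertices whose branch vertices are exactly D_2 ∪ D_3, where moreover all connecting paths have length 3 and internal vertices in D_1. -/
/-!
Edges inside `D₂ ∪ D₃` are used directly; a non-adjacent pair `x ∈ D₂`, `y ∈ D₃` is routed
through `D₁`. Since `D₁` is a maximum clique, Hall's theorem gives injections `f : D₃ → D₁` and
`g : D₂ → D₁` with `f y ≁ y` and `g x ≁ x`: for a set `s` inside a clique, the vertices of `D₁`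
adjacent to all of `s` form a clique together with `s`, so at least `|s|` vertices of `D₁` miss
some vertex of `s`. As `α(G) ≤ 2`, the walk `x, f y, g x, y` is then a path. The injectivity of
`f` and `g` keeps these detours edge-disjoint, except that the middle edges of two detours may
coincide crosswise (`f y = g x'`, `g x = f y'`); but then `x x' y y'` is an induced 4-cycle.
-/

/-- Every three distinct vertices span at least one edge, i.e. the
independence number of `G` is at most `2`. -/
def IndepNumAtMostTwo {V : Type*} (G : SimpleGraph V) : Prop :=
  ∀ a b c : V, a ≠ b → a ≠ c → b ≠ c → G.Adj a b ∨ G.Adj a c ∨ G.Adj b c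

open Finset

namespace SimpleGraph

variable {V : Type*} {G : SimpleGraph V}

theorem IsMaximumClique.card_le_card_filter_exists_not_adj [Finite V] [DecidableEq V]
    [DecidableRel G.Adj] {K s : Finset V} (hK : G.IsMaximumClique K)
    (hs : G.IsClique (s : Set V)) : #s ≤ #{w ∈ K | ∃ x ∈ s, ¬ G.Adj x w} := by
  set W := {w ∈ K | ∃ x ∈ s, ¬ G.Adj x w}
  have hWK : W ⊆ K := filter_subset _ _
  have hdisj : Disjoint (K \ W) s := by
    refine Finset.disjoint_left.2 fun x hx hxs => (mem_sdiff.1 hx).2 ?_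
    exact mem_filter.2 ⟨(mem_sdiff.1 hx).1, x, hxs, G.loopless.irrefl x⟩
  have hclique : G.IsClique ((K \ W ∪ s : Finset V) : Set V) := by
    rw [coe_union, IsClique, Set.pairwise_union]
    refine ⟨hK.isClique.subset (by simp), hs, fun w hw x hxs _ => ?_⟩
    have hw : w ∈ K ∧ w ∉ W := by simpa using hw
    have hxw : G.Adj x w := by
      by_contra hxw
      exact hw.2 (mem_filter.2 ⟨hw.1, x, hxs, hxw⟩)
    exact ⟨hxw.symm, hxw⟩
  have := hK.maximum _ hclique
  rw [card_union_of_disjoint hdisj, card_sdiff_of_subset hWK] at this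
  have := card_le_card hWK
  omega

structure IsNonadjInjection (G : SimpleGraph V) (D K : Set V) (f : V → V) : Prop where
  mapsTo : Set.MapsTo f D K
  injOn : Set.InjOn f D
  not_adj : ∀ x ∈ D, ¬ G.Adj x (f x)

theorem IsMaximumClique.exists_isNonadjInjection [Finite V] {K D : Finset V}
    (hK : G.IsMaximumClique K) (hD : G.IsClique (D : Set V)) :
    ∃ f, G.IsNonadjInjection D K f := by
  classical
  let t : D → Finset V := fun x => {w ∈ K | ¬ G.Adj x w}
  have hHall : ∀ s : Finset D, #s ≤ #(s.biUnion t) := fun s => calc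
    #s = #(s.map (Function.Embedding.subtype _)) := (card_map _).symm
    _ ≤ #{w ∈ K | ∃ x ∈ s.map (Function.Embedding.subtype _), ¬ G.Adj x w} :=
      hK.card_le_card_filter_exists_not_adj (hD.subset fun _ hx => by
        obtain ⟨x, -, rfl⟩ := mem_map.1 hx
        exact x.2)
    _ ≤ #(s.biUnion t) := card_le_card fun w hw => by
      obtain ⟨hwK, _, hx, hxw⟩ := mem_filter.1 hw
      obtain ⟨x, hxs, rfl⟩ := mem_map.1 hx
      exact mem_biUnion.2 ⟨x, hxs, mem_filter.2 ⟨hwK, hxw⟩⟩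
  obtain ⟨f, hf_inj, hf_mem⟩ := (all_card_le_biUnion_card_iff_exists_injective t).1 hHall
  refine ⟨fun x => if hx : x ∈ D then f ⟨x, hx⟩ else x, fun x hx => ?_, fun x hx y hy hxy => ?_,
    fun x hx => ?_⟩
  · simpa [mem_coe.1 hx] using (mem_filter.1 (hf_mem ⟨x, hx⟩)).1
  · exact congrArg Subtype.val (hf_inj (by simpa [mem_coe.1 hx, mem_coe.1 hy] using hxy))
  · simpa [mem_coe.1 hx] using (mem_filter.1 (hf_mem ⟨x, hx⟩)).2

def detourEdges (f g : V → V) (x y : V) : List (Sym2 V) :=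
  [s(x, f y), s(f y, g x), s(g x, y)]

theorem mem_detourEdges {f g : V → V} {x y : V} {e : Sym2 V} (he : e ∈ detourEdges f g x y) :
    f y ∈ e ∨ g x ∈ e := by
  simp only [detourEdges, List.mem_cons, List.not_mem_nil, or_false] at he
  rcases he with rfl | rfl | rfl <;> simp

/-- The edges the path joining the ends of `p` may use: `p` itself when it lies in `D₂ ∪ D₃`,
and otherwise the detour `x, f y, g x, y` of `p = s(x, y)`. -/
def IsRouteEdge [DecidableEq V] (G : SimpleGraph V) (D₂ D₃ : Finset V) (f g : V → V)
    (p e : Sym2 V) : Prop :=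
  (e = p ∧ ∀ w ∈ p, w ∈ D₂ ∪ D₃) ∨
    ∃ x ∈ D₂, ∃ y ∈ D₃, ¬ G.Adj x y ∧ p = s(x, y) ∧ e ∈ detourEdges f g x y

end SimpleGraph

namespace IndepNumAtMostTwo

open SimpleGraph

variable {V : Type*} {G : SimpleGraph V}

theorem adj_of_not_adj_of_not_adj (hα : IndepNumAtMostTwo G) {a b c : V}
    (hab : a ≠ b) (hac : a ≠ c) (hbc : b ≠ c) (h₁ : ¬ G.Adj a b) (h₂ : ¬ G.Adj b c) :
    G.Adj a c :=
  ((hα a b c hab hac hbc).resolve_left h₁).resolve_right h₂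

theorem exists_detour (hα : IndepNumAtMostTwo G) {K : Set V}
    (hK : G.IsClique K) {x y a b : V} (hx : x ∉ K) (hy : y ∉ K) (ha : a ∈ K) (hb : b ∈ K)
    (hxy : x ≠ y) (hnxy : ¬ G.Adj x y) (hxa : ¬ G.Adj x a) (hyb : ¬ G.Adj y b) :
    ∃ W : G.Walk x y, W.IsPath ∧ W.support = [x, b, a, y] ∧
      W.edges = [s(x, b), s(b, a), s(a, y)] := by
  have hxa' : x ≠ a := (ne_of_mem_of_not_mem ha hx).symm
  have hyb' : y ≠ b := (ne_of_mem_of_not_mem hb hy).symm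
  have hxb : G.Adj x b := hα.adj_of_not_adj_of_not_adj hxy
    (ne_of_mem_of_not_mem hb hx).symm hyb' hnxy hyb
  have hay : G.Adj a y := (hα.adj_of_not_adj_of_not_adj hxy.symm
    (ne_of_mem_of_not_mem ha hy).symm hxa' (fun h => hnxy h.symm) hxa).symm
  have hba : G.Adj b a := hK hb ha fun h => hyb (h ▸ hay.symm)
  refine ⟨.cons hxb (.cons hba (.cons hay .nil)), ?_, rfl, rfl⟩
  simp [Walk.isPath_def, hxb.ne, hba.ne, hay.ne, hxy, hxa', hyb'.symm]

variable {D₁ D₂ D₃ : Finset V} {f g : V → V}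

theorem eq_of_detour_middle_eq (hα : IndepNumAtMostTwo G)
    (h12 : Disjoint D₁ D₂) (h13 : Disjoint D₁ D₃) (h23 : Disjoint D₂ D₃)
    (hf : G.IsNonadjInjection D₃ D₁ f) (hg : G.IsNonadjInjection D₂ D₁ g)
    (hcross : ∀ x ∈ D₂, ∀ x' ∈ D₂, ∀ y ∈ D₃, ∀ y' ∈ D₃,
      ¬ G.Adj x y → ¬ G.Adj x' y' → G.Adj x' y → ¬ G.Adj x y')
    {x x' y y' : V} (hx : x ∈ D₂) (hx' : x' ∈ D₂) (hy : y ∈ D₃) (hy' : y' ∈ D₃)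
    (hxy : ¬ G.Adj x y) (hx'y' : ¬ G.Adj x' y') (h : s(f y, g x) = s(f y', g x')) :
    x = x' ∧ y = y' := by
  rcases Sym2.eq_iff.1 h with ⟨hfy, hgx⟩ | ⟨hfy, hgx⟩
  · exact ⟨hg.injOn hx hx' hgx, hf.injOn hy hy' hfy⟩
  · -- the crossing `f y = g x'`, `g x = f y'` makes `x x' y y'` an induced 4-cycle
    have hx'y : G.Adj x' y := hα.adj_of_not_adj_of_not_adj
      (h12.forall_ne_finset (hf.mapsTo hy) hx').symm (h23.forall_ne_finset hx' hy)
      (h13.forall_ne_finset (hf.mapsTo hy) hy) (hfy ▸ hg.not_adj x' hx')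
      fun h => hf.not_adj y hy h.symm
    have hxy' : G.Adj x y' := hα.adj_of_not_adj_of_not_adj
      (h12.forall_ne_finset (hf.mapsTo hy') hx).symm (h23.forall_ne_finset hx hy')
      (h13.forall_ne_finset (hf.mapsTo hy') hy') (hgx ▸ hg.not_adj x hx)
      fun h => hf.not_adj y' hy' h.symm
    exact absurd hxy' (hcross x hx x' hx' y hy y' hy' hxy hx'y' hx'y)

theorem detourEdges_disjoint (hα : IndepNumAtMostTwo G)
    (h12 : Disjoint D₁ D₂) (h13 : Disjoint D₁ D₃) (h23 : Disjoint D₂ D₃)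
    (hf : G.IsNonadjInjection D₃ D₁ f) (hg : G.IsNonadjInjection D₂ D₁ g)
    (hcross : ∀ x ∈ D₂, ∀ x' ∈ D₂, ∀ y ∈ D₃, ∀ y' ∈ D₃,
      ¬ G.Adj x y → ¬ G.Adj x' y' → G.Adj x' y → ¬ G.Adj x y')
    {x x' y y' : V} (hx : x ∈ D₂) (hx' : x' ∈ D₂) (hy : y ∈ D₃) (hy' : y' ∈ D₃)
    (hxy : ¬ G.Adj x y) (hx'y' : ¬ G.Adj x' y') (hne : (x, y) ≠ (x', y')) :
    (detourEdges f g x y).Disjoint (detourEdges f g x' y') := by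
  have hmid := hα.eq_of_detour_middle_eq h12 h13 h23 hf hg hcross hx hx' hy hy' hxy hx'y'
  rw [Ne, Prod.ext_iff] at hne
  have := hf.mapsTo hy
  have := hf.mapsTo hy'
  have := hg.mapsTo hx
  have := hg.mapsTo hx'
  have := hf.injOn hy hy'
  have := hg.injOn hx hx'
  have := Finset.disjoint_left.1 h12
  have := Finset.disjoint_left.1 h13
  have := Finset.disjoint_left.1 h23
  clear hcross hα hf hg h12 h13 h23 hxy hx'y'
  -- Other than the middle edges, an edge of a detour is pinned down by the parts containing
  -- its ends, and then by the injectivity of `f` or `g`.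
  intro e he he'
  simp only [detourEdges, List.mem_cons, List.not_mem_nil, or_false] at he he'
  rcases he with rfl | rfl | rfl <;> rcases he' with h | h | h
  all_goals grind

theorem eq_of_isRouteEdge [DecidableEq V] (hα : IndepNumAtMostTwo G)
    (h12 : Disjoint D₁ D₂) (h13 : Disjoint D₁ D₃) (h23 : Disjoint D₂ D₃)
    (hf : G.IsNonadjInjection D₃ D₁ f) (hg : G.IsNonadjInjection D₂ D₁ g)
    (hcross : ∀ x ∈ D₂, ∀ x' ∈ D₂, ∀ y ∈ D₃, ∀ y' ∈ D₃,
      ¬ G.Adj x y → ¬ G.Adj x' y' → G.Adj x' y → ¬ G.Adj x y')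
    {p p' e : Sym2 V} (h : G.IsRouteEdge D₂ D₃ f g p e) (h' : G.IsRouteEdge D₂ D₃ f g p' e) :
    p = p' := by
  have hD₁ : ∀ {w}, w ∈ D₁ → w ∉ D₂ ∪ D₃ := fun hw =>
    notMem_union.2 ⟨Finset.disjoint_left.1 h12 hw, Finset.disjoint_left.1 h13 hw⟩
  have detour_not_direct : ∀ {x y}, x ∈ D₂ → y ∈ D₃ → e ∈ detourEdges f g x y →
      ¬ ∀ w ∈ e, w ∈ D₂ ∪ D₃ := fun hx hy he hout =>
    (mem_detourEdges he).elim (fun hw => hD₁ (hf.mapsTo hy) (hout _ hw))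
      fun hw => hD₁ (hg.mapsTo hx) (hout _ hw)
  rcases h with ⟨rfl, hout⟩ | ⟨x, hx, y, hy, hxy, rfl, he⟩ <;>
    rcases h' with ⟨rfl, hout'⟩ | ⟨x', hx', y', hy', hx'y', rfl, he'⟩
  · rfl
  · exact absurd hout (detour_not_direct hx' hy' he')
  · exact absurd hout' (detour_not_direct hx hy he)
  · by_cases hne : (x, y) = (x', y')
    · obtain ⟨rfl, rfl⟩ := Prod.mk.inj hne
      rfl
    · exact absurd he' (hα.detourEdges_disjoint h12 h13 h23 hf hg hcross hx hx' hy hy' hxy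
        hx'y' hne he)

theorem exists_route [DecidableEq V] (hα : IndepNumAtMostTwo G) (hD₁ : G.IsClique (D₁ : Set V))
    (hD₂ : G.IsClique (D₂ : Set V)) (hD₃ : G.IsClique (D₃ : Set V))
    (h12 : Disjoint D₁ D₂) (h13 : Disjoint D₁ D₃)
    (hf : G.IsNonadjInjection D₃ D₁ f) (hg : G.IsNonadjInjection D₂ D₁ g)
    {u v : V} (hu : u ∈ D₂ ∪ D₃) (hv : v ∈ D₂ ∪ D₃) (huv : u ≠ v) :
    ∃ W : G.Walk u v, W.IsPath ∧
      (W.length = 1 ∨ (W.length = 3 ∧ ∀ w ∈ W.support, w ≠ u → w ≠ v → w ∈ D₁)) ∧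
      ∀ e ∈ W.edges, G.IsRouteEdge D₂ D₃ f g s(u, v) e := by
  by_cases hadj : G.Adj u v
  · refine ⟨hadj.toWalk, by simp [Walk.isPath_def, hadj.ne], Or.inl rfl, fun e he => ?_⟩
    refine Or.inl ⟨by simpa using he, fun w hw => ?_⟩
    rcases Sym2.mem_iff.1 hw with rfl | rfl <;> assumption
  wlog hu₂ : u ∈ D₂ generalizing u v
  · have hv₂ : v ∈ D₂ := (mem_union.1 hv).resolve_right fun hv₃ =>
      hadj (hD₃ ((mem_union.1 hu).resolve_left hu₂) hv₃ huv)
    obtain ⟨W, hW_path, hW_len, hW_edges⟩ := this hv hu huv.symm (fun h => hadj h.symm) hv₂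
    refine ⟨W.reverse, hW_path.reverse, ?_, fun e he => ?_⟩
    · simp only [Walk.length_reverse, Walk.support_reverse, List.mem_reverse]
      rcases hW_len with h | ⟨h, hW_supp⟩
      exacts [Or.inl h, Or.inr ⟨h, fun w hw hwu hwv => hW_supp w hw hwv hwu⟩]
    · rw [Sym2.eq_swap]
      exact hW_edges e (by simpa using he)
  have hv₃ : v ∈ D₃ := (mem_union.1 hv).resolve_left fun hv₂ => hadj (hD₂ hu₂ hv₂ huv)
  obtain ⟨W, hW_path, hW_supp, hW_edges⟩ := hα.exists_detour hD₁
    (Finset.disjoint_right.1 h12 hu₂) (Finset.disjoint_right.1 h13 hv₃) (hg.mapsTo hu₂)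
    (hf.mapsTo hv₃) huv hadj (hg.not_adj u hu₂) (hf.not_adj v hv₃)
  refine ⟨W, hW_path, Or.inr ⟨?_, ?_⟩, fun e he => Or.inr ⟨u, hu₂, v, hv₃, hadj, rfl, ?_⟩⟩
  · simpa [hW_supp] using W.length_support.symm
  · simp only [hW_supp, List.mem_cons, List.not_mem_nil, or_false]
    rintro w (rfl | rfl | rfl | rfl) <;> intro hwu hwv
    exacts [absurd rfl hwu, hf.mapsTo hv₃, hg.mapsTo hu₂, absurd rfl hwv]
  · rwa [hW_edges] at he

end IndepNumAtMostTwo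

theorem immersion_of_three_clique_coloring_general {V : Type*} [Fintype V] [DecidableEq V]
    (G : SimpleGraph V)
    (hα : IndepNumAtMostTwo G)
    (D1 D2 D3 : Finset V)
    (hpart : Disjoint D1 D2 ∧ Disjoint D1 D3 ∧ Disjoint D2 D3 ∧
      D1 ∪ D2 ∪ D3 = Finset.univ)
    (hD1 : G.IsClique ↑D1) (hD2 : G.IsClique ↑D2) (hD3 : G.IsClique ↑D3)
    (hD1max : ∀ s : Finset V, G.IsClique ↑s → s.card ≤ D1.card)
    (hC4 : ¬ ∃ u u' v v' : V, u ∈ D2 ∪ D3 ∧ u' ∈ D2 ∪ D3 ∧ v ∈ D2 ∪ D3 ∧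
      v' ∈ D2 ∪ D3 ∧ u ≠ u' ∧ u ≠ v ∧ u ≠ v' ∧ u' ≠ v ∧ u' ≠ v' ∧ v ≠ v' ∧
      G.Adj u u' ∧ G.Adj u' v ∧ G.Adj v v' ∧ G.Adj v' u ∧
      ¬ G.Adj u v ∧ ¬ G.Adj u' v') :
    ∃ P : (u : V) → (v : V) → u ∈ D2 ∪ D3 → v ∈ D2 ∪ D3 → u ≠ v → G.Walk u v,
      (∀ u v hu hv h, (P u v hu hv h).IsPath) ∧
      (∀ u v hu hv h, (P u v hu hv h).length = 1 ∨
        ((P u v hu hv h).length = 3 ∧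
          ∀ w ∈ (P u v hu hv h).support, w ≠ u → w ≠ v → w ∈ D1)) ∧
      (∀ u v u' v' hu hv h hu' hv' h', s(u, v) ≠ s(u', v') →
        ∀ e ∈ (P u v hu hv h).edges, e ∉ (P u' v' hu' hv' h').edges) := by
  obtain ⟨h12, h13, h23, -⟩ := hpart
  have hK : G.IsMaximumClique D1 := ⟨hD1, hD1max⟩
  obtain ⟨g, hg⟩ := hK.exists_isNonadjInjection hD2
  obtain ⟨f, hf⟩ := hK.exists_isNonadjInjection hD3
  have hcross : ∀ x ∈ D2, ∀ x' ∈ D2, ∀ y ∈ D3, ∀ y' ∈ D3,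
      ¬ G.Adj x y → ¬ G.Adj x' y' → G.Adj x' y → ¬ G.Adj x y' := by
    intro x hx x' hx' y hy y' hy' hxy hx'y' hx'y hxy'
    have hxx' : x ≠ x' := fun h => hxy (h ▸ hx'y)
    have hyy' : y ≠ y' := fun h => hx'y' (h ▸ hx'y)
    exact hC4 ⟨x, x', y, y', mem_union_left _ hx, mem_union_left _ hx', mem_union_right _ hy,
      mem_union_right _ hy', hxx', h23.forall_ne_finset hx hy, hxy'.ne, hx'y.ne,
      h23.forall_ne_finset hx' hy', hyy', hD2 hx hx' hxx', hx'y, hD3 hy hy' hyy', hxy'.symm,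
      hxy, hx'y'⟩
  choose P hP_path hP_len hP_edges using
    fun u v (hu : u ∈ D2 ∪ D3) (hv : v ∈ D2 ∪ D3) (huv : u ≠ v) =>
      hα.exists_route hD1 hD2 hD3 h12 h13 hf hg hu hv huv
  refine ⟨P, hP_path, hP_len, fun u v u' v' hu hv huv hu' hv' huv' hne e he he' => hne ?_⟩
  exact hα.eq_of_isRouteEdge h12 h13 h23 hf hg hcross (hP_edges u v hu hv huv e he)
    (hP_edges u' v' hu' hv' huv' e he')

/-- Main structural theorem: if `G` has independence number 2 and admits a
3-clique coloring `{D_1, D_2, D_3}` with `D_1` a maximum clique and no induced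
`C_4` in `G[D_2 ∪ D_3]`, then `G` contains an immersion of a complete graph with
branch vertices exactly `D_2 ∪ D_3`, with all nontrivial connecting paths of
length 3 and internal vertices in `D_1`. -/
theorem immersion_of_three_clique_coloring {V : Type*} [Fintype V] [DecidableEq V]
    (G : SimpleGraph V)
    (hα : IndepNumAtMostTwo G) (hnc : ∃ x y : V, x ≠ y ∧ ¬ G.Adj x y)
    (D1 D2 D3 : Finset V)
    (hpart : Disjoint D1 D2 ∧ Disjoint D1 D3 ∧ Disjoint D2 D3 ∧
      D1 ∪ D2 ∪ D3 = Finset.univ)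
    (hD1 : G.IsClique ↑D1) (hD2 : G.IsClique ↑D2) (hD3 : G.IsClique ↑D3)
    (hD1max : ∀ s : Finset V, G.IsClique ↑s → s.card ≤ D1.card)
    (hC4 : ¬ ∃ u u' v v' : V, u ∈ D2 ∪ D3 ∧ u' ∈ D2 ∪ D3 ∧ v ∈ D2 ∪ D3 ∧
      v' ∈ D2 ∪ D3 ∧ u ≠ u' ∧ u ≠ v ∧ u ≠ v' ∧ u' ≠ v ∧ u' ≠ v' ∧ v ≠ v' ∧
      G.Adj u u' ∧ G.Adj u' v ∧ G.Adj v v' ∧ G.Adj v' u ∧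
      ¬ G.Adj u v ∧ ¬ G.Adj u' v') :
    ∃ P : (u : V) → (v : V) → u ∈ D2 ∪ D3 → v ∈ D2 ∪ D3 → u ≠ v → G.Walk u v,
      (∀ u v hu hv h, (P u v hu hv h).IsPath) ∧
      (∀ u v hu hv h, (P u v hu hv h).length = 1 ∨
        ((P u v hu hv h).length = 3 ∧
          ∀ w ∈ (P u v hu hv h).support, w ≠ u → w ≠ v → w ∈ D1)) ∧
      (∀ u v u' v' hu hv h hu' hv' h', s(u, v) ≠ s(u', v') →
        ∀ e ∈ (P u v hu hv h).edges, e ∉ (P u' v' hu' hv' h').edges) :=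
  immersion_of_three_clique_coloring_general G hα D1 D2 D3 hpart hD1 hD2 hD3 hD1max hC4
end

section
/- Let G be a finite graph with independence number at most 2, let D_1 be a maximum clique of G, and let D ⊆ V(G) \ D_1 be a clique. Then for every subset C ⊆ D, the number of vertices in D_1 that are nonadjacent in G to at least one vertex of C is at least |C|; consequently, there is a matching in the complement of G between D and D_1 covering D (assigning to each u ∈ D a distinct vertex r_u ∈ D_1 with u r_u not an edge of G). -/
/-- Hall-type condition and system of distinct representatives: if `D_1` is a
maximum clique of `G` (with `α(G) ≤ 2`) and `D` is a clique disjoint from `D_1`,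
then every `C ⊆ D` has at least `|C|` non-neighbors in `D_1`, and consequently
each `u ∈ D` can be assigned a distinct representative `r u ∈ D_1` nonadjacent
to `u`. -/
theorem hall_representatives {V : Type*} [Fintype V] [DecidableEq V]
    (G : SimpleGraph V) [DecidableRel G.Adj]
    (hα : IndepNumAtMostTwo G)
    (D1 : Finset V) (hD1 : G.IsClique ↑D1)
    (hD1max : ∀ s : Finset V, G.IsClique ↑s → s.card ≤ D1.card)
    (D : Finset V) (hD : G.IsClique ↑D) (hdisj : Disjoint D D1) :
    (∀ C ⊆ D, C.card ≤ (D1.filter fun w => ∃ u ∈ C, ¬ G.Adj u w).card) ∧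
    ∃ r : V → V, Set.InjOn r ↑D ∧ ∀ u ∈ D, r u ∈ D1 ∧ ¬ G.Adj u (r u) := by
  have hall : ∀ C ⊆ D, C.card ≤ (D1.filter fun w => ∃ u ∈ C, ¬ G.Adj u w).card := by
    intro C hC
    by_contra h
    push_neg at h
    set N := D1.filter fun w => ∃ u ∈ C, ¬ G.Adj u w with hN
    have hNsub : N ⊆ D1 := Finset.filter_subset _ _
    have hdisj' : Disjoint C (D1 \ N) :=
      Finset.disjoint_of_subset_left hC
        (Finset.disjoint_of_subset_right (Finset.sdiff_subset) hdisj)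
    have hclique : G.IsClique ↑(C ∪ (D1 \ N)) := by
      intro x hx y hy hxy
      simp only [Finset.coe_union, Set.mem_union, Finset.coe_sdiff, Set.mem_diff,
        Finset.mem_coe] at hx hy
      have key : ∀ u ∈ C, ∀ w ∈ D1, w ∉ N → G.Adj u w := by
        intro u hu w hw hwN
        by_contra hne
        exact hwN (Finset.mem_filter.mpr ⟨hw, u, hu, hne⟩)
      rcases hx with hx | ⟨hx1, hxN⟩
      · rcases hy with hy | ⟨hy1, hyN⟩
        · exact hD (hC hx) (hC hy) hxy
        · exact key x hx y hy1 hyN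
      · rcases hy with hy | ⟨hy1, hyN⟩
        · exact (key y hy x hx1 hxN).symm
        · exact hD1 hx1 hy1 hxy
    have hcard := hD1max _ hclique
    rw [Finset.card_union_of_disjoint hdisj', Finset.card_sdiff_of_subset hNsub] at hcard
    have hN1 : N.card ≤ D1.card := Finset.card_le_card hNsub
    omega
  refine ⟨hall, ?_⟩
  have hallS : ∀ s : Finset ↥D,
      s.card ≤ (s.biUnion fun u => D1.filter fun w => ¬ G.Adj u.1 w).card := by
    intro s
    have hsub : Finset.image (fun u => u.1) s ⊆ D := by
      intro x hx
      simp only [Finset.mem_image] at hx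
      obtain ⟨⟨u, hu⟩, _, rfl⟩ := hx
      exact hu
    have h1 := hall _ hsub
    have hcard : (Finset.image (fun u => u.1) s).card = s.card :=
      Finset.card_image_of_injective _ Subtype.val_injective
    refine le_trans (hcard ▸ h1) (Finset.card_le_card ?_)
    intro w hw
    simp only [Finset.mem_filter, Finset.mem_image] at hw
    obtain ⟨hw1, u, ⟨⟨a, ha⟩, has, rfl⟩, hadj⟩ := hw
    exact Finset.mem_biUnion.mpr ⟨⟨a, ha⟩, has, Finset.mem_filter.mpr ⟨hw1, hadj⟩⟩
  obtain ⟨f, hfinj, hf⟩ :=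
    (Finset.all_card_le_biUnion_card_iff_existsInjective'
      (fun u : ↥D => D1.filter fun w => ¬ G.Adj u.1 w)).mp hallS
  refine ⟨fun v => if h : v ∈ D then f ⟨v, h⟩ else v, ?_, ?_⟩
  · intro a ha b hb hab
    simp only [Finset.mem_coe] at ha hb
    simp only [dif_pos ha, dif_pos hb] at hab
    exact Subtype.ext_iff.mp (hfinj hab)
  · intro u hu
    simp only [dif_pos hu]
    have := hf ⟨u, hu⟩
    simp only [Finset.mem_filter] at this
    exact this
end

section
/- Let G be a graph with independence number 2 such that removing any edge creates an independent set of size 3, and let C = ⟨v_1, v_2, v_3, v_4, v_5⟩ be an induced 5-cycle in G. Then every vertex of G not on C is adjacent to three consecutive vertices of C (indices modulo 5). -/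
lemma aux_consec (P : Fin 5 → Prop) (h : ∀ i : Fin 5, P i ∨ P (i + 2)) :
    ∃ i : Fin 5, P (i - 1) ∧ P i ∧ P (i + 1) := by
  have h0 := h 0; have h1 := h 1; have h2 := h 2; have h3 := h 3; have h4 := h 4
  rw [show (0 : Fin 5) + 2 = 2 by decide] at h0
  rw [show (1 : Fin 5) + 2 = 3 by decide] at h1
  rw [show (2 : Fin 5) + 2 = 4 by decide] at h2
  rw [show (3 : Fin 5) + 2 = 0 by decide] at h3
  rw [show (4 : Fin 5) + 2 = 1 by decide] at h4
  have hs : (P 4 ∧ P 0 ∧ P 1) ∨ (P 0 ∧ P 1 ∧ P 2) ∨ (P 1 ∧ P 2 ∧ P 3) ∨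
      (P 2 ∧ P 3 ∧ P 4) ∨ (P 3 ∧ P 4 ∧ P 0) := by tauto
  rcases hs with h | h | h | h | h
  · exact ⟨0, by rw [show (0 : Fin 5) - 1 = 4 by decide, show (0 : Fin 5) + 1 = 1 by decide]; exact h⟩
  · exact ⟨1, by rw [show (1 : Fin 5) - 1 = 0 by decide, show (1 : Fin 5) + 1 = 2 by decide]; exact h⟩
  · exact ⟨2, by rw [show (2 : Fin 5) - 1 = 1 by decide, show (2 : Fin 5) + 1 = 3 by decide]; exact h⟩
  · exact ⟨3, by rw [show (3 : Fin 5) - 1 = 2 by decide, show (3 : Fin 5) + 1 = 4 by decide]; exact h⟩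
  · exact ⟨4, by rw [show (4 : Fin 5) - 1 = 3 by decide, show (4 : Fin 5) + 1 = 0 by decide]; exact h⟩

/-- In an edge-minimal graph with independence number 2, every vertex not on an
induced 5-cycle `C` is adjacent to three consecutive vertices of `C`. -/
theorem adjacent_three_consecutive {V : Type*} (G : SimpleGraph V)
    (hα : IndepNumAtMostTwo G)
    (hnc : ∃ x y : V, x ≠ y ∧ ¬ G.Adj x y)
    (hmin : ∀ x y : V, G.Adj x y → ∃ a b c : V, a ≠ b ∧ a ≠ c ∧ b ≠ c ∧
      ¬ (G.deleteEdges {s(x, y)}).Adj a b ∧ ¬ (G.deleteEdges {s(x, y)}).Adj a c ∧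
      ¬ (G.deleteEdges {s(x, y)}).Adj b c)
    (v : Fin 5 → V) (hv : Function.Injective v)
    (hC : ∀ i j : Fin 5, G.Adj (v i) (v j) ↔ (j = i + 1 ∨ i = j + 1)) :
    ∀ u : V, (∀ i : Fin 5, u ≠ v i) →
      ∃ i : Fin 5, G.Adj u (v (i - 1)) ∧ G.Adj u (v i) ∧ G.Adj u (v (i + 1)) := by
  intro u hu
  apply aux_consec (fun i => G.Adj u (v i))
  intro i
  have hne : i ≠ i + 2 := by
    intro he
    have h02 : (0 : Fin 5) = 2 :=
      add_left_cancel (a := i) (b := (0 : Fin 5)) (c := 2) (by rw [add_zero]; exact he)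
    exact absurd h02 (by decide)
  have hnadj : ¬ G.Adj (v i) (v (i + 2)) := by
    rw [hC]
    rintro (h | h)
    · exact absurd (add_left_cancel (a := i) (b := (2 : Fin 5)) (c := 1) h) (by decide)
    · have h03 : (0 : Fin 5) = 3 := by
        have hh : i + 0 = i + 3 := by rw [add_zero]; rw [add_assoc] at h; exact h
        exact add_left_cancel hh
      exact absurd h03 (by decide)
  rcases hα u (v i) (v (i + 2)) (hu i) (hu (i + 2)) (fun he => hne (hv he)) with h | h | h
  · exact Or.inl h
  · exact Or.inr h
  · exact absurd h hnadj
end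

section
/- Let G be a finite graph and suppose V(G) partitions into nonempty sets V_1, V_2 with every vertex of V_1 adjacent to every vertex of V_2. If G[V_1] contains an immersion of K_{k_1} and G[V_2] contains an immersion of K_{k_2}, then G contains an immersion of K_{k_1 + k_2}. -/
/-- `G` contains an immersion of the complete graph whose branch vertices are
exactly the elements of `B`: a family of pairwise edge-disjoint paths in `G`
joining every pair of distinct vertices of `B`. -/
def HasCliqueImmersionOn {V : Type*} (G : SimpleGraph V) (B : Finset V) : Prop :=
  ∃ P : (u : V) → (v : V) → u ∈ B → v ∈ B → u ≠ v → G.Walk u v,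
    (∀ u v hu hv h, (P u v hu hv h).IsPath) ∧
    (∀ u v u' v' hu hv h hu' hv' h', s(u, v) ≠ s(u', v') →
      ∀ e ∈ (P u v hu hv h).edges, e ∉ (P u' v' hu' hv' h').edges)

/-- `G` contains an immersion of the complete graph `K_t`. -/
def HasCliqueImmersion {V : Type*} (G : SimpleGraph V) (t : ℕ) : Prop :=
  ∃ B : Finset V, B.card = t ∧ HasCliqueImmersionOn G B

/-- If `V(G)` is partitioned into nonempty sets `V_1, V_2` with all edges between
them, and `G[V_1]`, `G[V_2]` contain immersions of `K_{k_1}`, `K_{k_2}`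
respectively, then `G` contains an immersion of `K_{k_1 + k_2}`. -/
theorem immersion_join {V : Type*} (G : SimpleGraph V) (V1 V2 : Set V)
    (h1 : V1.Nonempty) (h2 : V2.Nonempty)
    (hdisj : Disjoint V1 V2) (hunion : V1 ∪ V2 = Set.univ)
    (hjoin : ∀ u ∈ V1, ∀ v ∈ V2, G.Adj u v)
    (k1 k2 : ℕ)
    (him1 : HasCliqueImmersion (G.induce V1) k1)
    (him2 : HasCliqueImmersion (G.induce V2) k2) :
    HasCliqueImmersion G (k1 + k2) := by
  classical
  obtain ⟨B1, hB1card, P1, hP1path, hP1disj⟩ := him1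
  obtain ⟨B2, hB2card, P2, hP2path, hP2disj⟩ := him2
  have memV2 : ∀ {u : V}, u ∉ V1 → u ∈ V2 := by
    intro u h
    have : u ∈ V1 ∪ V2 := hunion.symm ▸ Set.mem_univ u
    exact this.resolve_left h
  let ι1 : ↥V1 ↪ V := Function.Embedding.subtype _
  let ι2 : ↥V2 ↪ V := Function.Embedding.subtype _
  have hdisjF : Disjoint (B1.map ι1) (B2.map ι2) := by
    simp only [Finset.disjoint_left, Finset.mem_map]
    rintro x ⟨a, _, rfl⟩ ⟨b, _, hb⟩
    have hb' : (b : V) = (a : V) := hb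
    exact Set.disjoint_left.mp hdisj a.2 (hb' ▸ b.2)
  set B : Finset V := (B1.map ι1).disjUnion (B2.map ι2) hdisjF with hB
  have memB1 : ∀ {u : V} (hu1 : u ∈ V1), u ∈ B → (⟨u, hu1⟩ : ↥V1) ∈ B1 := by
    intro u hu1 hu
    rcases Finset.mem_disjUnion.mp hu with h | h
    · obtain ⟨a, ha, rfl⟩ := Finset.mem_map.mp h
      exact ha
    · obtain ⟨b, hb, rfl⟩ := Finset.mem_map.mp h
      exact (Set.disjoint_left.mp hdisj hu1 b.2).elim
  have memB2 : ∀ {u : V} (hu2 : u ∈ V2), u ∈ B → (⟨u, hu2⟩ : ↥V2) ∈ B2 := by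
    intro u hu2 hu
    rcases Finset.mem_disjUnion.mp hu with h | h
    · obtain ⟨a, ha, rfl⟩ := Finset.mem_map.mp h
      exact (Set.disjoint_left.mp hdisj a.2 hu2).elim
    · obtain ⟨b, hb, rfl⟩ := Finset.mem_map.mp h
      exact hb
  let f1 : G.induce V1 →g G := ⟨fun x => x.val, fun {a b} h => h⟩
  let f2 : G.induce V2 →g G := ⟨fun x => x.val, fun {a b} h => h⟩
  refine ⟨B, by rw [hB, Finset.card_disjUnion, Finset.card_map, Finset.card_map, hB1card, hB2card], fun u v hu hv hne =>
    if hu1 : u ∈ V1 then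
      if hv1 : v ∈ V1 then
        ((P1 ⟨u, hu1⟩ ⟨v, hv1⟩ (memB1 hu1 hu) (memB1 hv1 hv)
          (fun h => hne (congrArg Subtype.val h))).map f1)
      else SimpleGraph.Walk.cons (hjoin u hu1 v (memV2 hv1)) SimpleGraph.Walk.nil
    else
      if hv1 : v ∈ V1 then
        SimpleGraph.Walk.cons ((hjoin v hv1 u (memV2 hu1)).symm) SimpleGraph.Walk.nil
      else
        ((P2 ⟨u, memV2 hu1⟩ ⟨v, memV2 hv1⟩ (memB2 _ hu) (memB2 _ hv)
          (fun h => hne (congrArg Subtype.val h))).map f2), ?_, ?_⟩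
  · intro u v hu hv hne
    by_cases hu1 : u ∈ V1 <;> by_cases hv1 : v ∈ V1 <;>
      simp only [dif_pos, dif_neg, hu1, hv1]
    · exact SimpleGraph.Walk.map_isPath_of_injective Subtype.val_injective (hP1path _ _ _ _ _)
    · simp [hne]
    · simp [hne]
    · exact SimpleGraph.Walk.map_isPath_of_injective Subtype.val_injective (hP2path _ _ _ _ _)
  · have inSet1 : ∀ {a b : ↥V1} (w : (G.induce V1).Walk a b) {e : Sym2 V},
        e ∈ (w.map f1).edges → ∀ x ∈ e, x ∈ V1 := by
      intro a b w e he x hx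
      rw [SimpleGraph.Walk.edges_map] at he
      obtain ⟨e', _, rfl⟩ := List.mem_map.mp he
      obtain ⟨y, hy, rfl⟩ := Sym2.mem_map.mp hx
      exact y.2
    have inSet2 : ∀ {a b : ↥V2} (w : (G.induce V2).Walk a b) {e : Sym2 V},
        e ∈ (w.map f2).edges → ∀ x ∈ e, x ∈ V2 := by
      intro a b w e he x hx
      rw [SimpleGraph.Walk.edges_map] at he
      obtain ⟨e', _, rfl⟩ := List.mem_map.mp he
      obtain ⟨y, hy, rfl⟩ := Sym2.mem_map.mp hx
      exact y.2
    have getE1 : ∀ {a b : ↥V1} (w : (G.induce V1).Walk a b) {e : Sym2 V},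
        e ∈ (w.map f1).edges → ∃ e' ∈ w.edges, Sym2.map (Subtype.val : ↥V1 → V) e' = e := by
      intro a b w e he
      rw [SimpleGraph.Walk.edges_map] at he
      exact List.mem_map.mp he
    have getE2 : ∀ {a b : ↥V2} (w : (G.induce V2).Walk a b) {e : Sym2 V},
        e ∈ (w.map f2).edges → ∃ e' ∈ w.edges, Sym2.map (Subtype.val : ↥V2 → V) e' = e := by
      intro a b w e he
      rw [SimpleGraph.Walk.edges_map] at he
      exact List.mem_map.mp he
    intro u v u' v' hu hv h hu' hv' h' hSne e he he'
    by_cases hu1 : u ∈ V1 <;> by_cases hv1 : v ∈ V1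
    · simp only [dif_pos hu1, dif_pos hv1] at he
      by_cases hu'1 : u' ∈ V1 <;> by_cases hv'1 : v' ∈ V1
      · -- V1-V1 vs V1-V1
        simp only [dif_pos hu'1, dif_pos hv'1] at he'
        obtain ⟨e1, he1, rfl⟩ := getE1 _ he
        obtain ⟨e1', he1', heq⟩ := getE1 _ he'
        have : e1' = e1 := Sym2.map.injective Subtype.val_injective heq
        subst this
        refine hP1disj _ _ _ _ _ _ _ _ _ _ ?_ _ he1 he1'
        intro hh
        apply hSne
        have := congrArg (Sym2.map (Subtype.val : ↥V1 → V)) hh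
        simpa [Sym2.map_pair_eq] using this
      · simp only [dif_pos hu'1, dif_neg hv'1] at he'
        simp only [SimpleGraph.Walk.edges_cons, SimpleGraph.Walk.edges_nil,
          List.mem_singleton] at he'
        subst he'
        exact Set.disjoint_left.mp hdisj (inSet1 _ he v' (Sym2.mem_mk_right _ _)) (memV2 hv'1)
      · simp only [dif_neg hu'1, dif_pos hv'1] at he'
        simp only [SimpleGraph.Walk.edges_cons, SimpleGraph.Walk.edges_nil,
          List.mem_singleton] at he'
        subst he'
        exact Set.disjoint_left.mp hdisj (inSet1 _ he u' (Sym2.mem_mk_left _ _)) (memV2 hu'1)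
      · simp only [dif_neg hu'1, dif_neg hv'1] at he'
        exact Set.disjoint_left.mp hdisj (inSet1 _ he _ (Sym2.out_fst_mem e))
          (inSet2 _ he' _ (Sym2.out_fst_mem e))
    · simp only [dif_pos hu1, dif_neg hv1] at he
      simp only [SimpleGraph.Walk.edges_cons, SimpleGraph.Walk.edges_nil,
        List.mem_singleton] at he
      subst he
      by_cases hu'1 : u' ∈ V1 <;> by_cases hv'1 : v' ∈ V1
      · simp only [dif_pos hu'1, dif_pos hv'1] at he'
        exact Set.disjoint_left.mp hdisj (inSet1 _ he' v (Sym2.mem_mk_right _ _)) (memV2 hv1)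
      · simp only [dif_pos hu'1, dif_neg hv'1] at he'
        simp only [SimpleGraph.Walk.edges_cons, SimpleGraph.Walk.edges_nil,
          List.mem_singleton] at he'
        exact hSne he'
      · simp only [dif_neg hu'1, dif_pos hv'1] at he'
        simp only [SimpleGraph.Walk.edges_cons, SimpleGraph.Walk.edges_nil,
          List.mem_singleton] at he'
        exact hSne he'
      · simp only [dif_neg hu'1, dif_neg hv'1] at he'
        exact Set.disjoint_left.mp hdisj hu1 (inSet2 _ he' u (Sym2.mem_mk_left _ _))
    · simp only [dif_neg hu1, dif_pos hv1] at he
      simp only [SimpleGraph.Walk.edges_cons, SimpleGraph.Walk.edges_nil,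
        List.mem_singleton] at he
      subst he
      by_cases hu'1 : u' ∈ V1 <;> by_cases hv'1 : v' ∈ V1
      · simp only [dif_pos hu'1, dif_pos hv'1] at he'
        exact Set.disjoint_left.mp hdisj (inSet1 _ he' u (Sym2.mem_mk_left _ _)) (memV2 hu1)
      · simp only [dif_pos hu'1, dif_neg hv'1] at he'
        simp only [SimpleGraph.Walk.edges_cons, SimpleGraph.Walk.edges_nil,
          List.mem_singleton] at he'
        exact hSne he'
      · simp only [dif_neg hu'1, dif_pos hv'1] at he'
        simp only [SimpleGraph.Walk.edges_cons, SimpleGraph.Walk.edges_nil,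
          List.mem_singleton] at he'
        exact hSne he'
      · simp only [dif_neg hu'1, dif_neg hv'1] at he'
        exact Set.disjoint_left.mp hdisj hv1 (inSet2 _ he' v (Sym2.mem_mk_right _ _))
    · simp only [dif_neg hu1, dif_neg hv1] at he
      by_cases hu'1 : u' ∈ V1 <;> by_cases hv'1 : v' ∈ V1
      · simp only [dif_pos hu'1, dif_pos hv'1] at he'
        exact Set.disjoint_left.mp hdisj (inSet1 _ he' _ (Sym2.out_fst_mem e))
          (inSet2 _ he _ (Sym2.out_fst_mem e))
      · simp only [dif_pos hu'1, dif_neg hv'1] at he'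
        simp only [SimpleGraph.Walk.edges_cons, SimpleGraph.Walk.edges_nil,
          List.mem_singleton] at he'
        subst he'
        exact Set.disjoint_left.mp hdisj hu'1 (inSet2 _ he u' (Sym2.mem_mk_left _ _))
      · simp only [dif_neg hu'1, dif_pos hv'1] at he'
        simp only [SimpleGraph.Walk.edges_cons, SimpleGraph.Walk.edges_nil,
          List.mem_singleton] at he'
        subst he'
        exact Set.disjoint_left.mp hdisj hv'1 (inSet2 _ he v' (Sym2.mem_mk_right _ _))
      · -- V2-V2 vs V2-V2
        simp only [dif_neg hu'1, dif_neg hv'1] at he'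
        obtain ⟨e2, he2, rfl⟩ := getE2 _ he
        obtain ⟨e2', he2', heq⟩ := getE2 _ he'
        have : e2' = e2 := Sym2.map.injective Subtype.val_injective heq
        subst this
        refine hP2disj _ _ _ _ _ _ _ _ _ _ ?_ _ he2 he2'
        intro hh
        apply hSne
        have := congrArg (Sym2.map (Subtype.val : ↥V2 → V)) hh
        simpa [Sym2.map_pair_eq] using this
end
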